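/- arXiv:0705.1446 — 3 statements merged into one kernel-verified Lean document; each statement's English description precedes it below -/
import Mathlib

section
/- Let n ≥ 1 and let m be an n × n Boolean matrix with entries m(i,j) for 0 ≤ i,j ≤ n−1. Define S = {0, 1, …, n} and a multiplication table T on S by: T(0, j) = 0 and T(i, 0) = 0 for all i, j, and for 1 ≤ i, j ≤ n, T(i, j) = i if m(i−1, j−1) = 1 and T(i, j) = 0 if m(i−1, j−1) = 0. Then m has an all-ones column (there exists j with m(i, j) = 1 for every i) if and only if T has a right identity element (there exists e ∈ S with T(x, e) = x for every x ∈ S). -/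
/-- Let `n ≥ 1` and let `m` be an `n × n` Boolean matrix (indices `0, …, n-1`,
`true` meaning entry `1`).  Define a multiplication table `T` on
`S = {0, 1, …, n}` by `T 0 j = 0`, `T i 0 = 0`, and for `1 ≤ i, j ≤ n`,
`T i j = i` if `m (i-1) (j-1) = true` and `T i j = 0` otherwise.  Then `m` has
an all-ones column iff `T` has a right identity element. -/
theorem ones_column_iff_right_identity (n : ℕ) (hn : 1 ≤ n)
    (m : ℕ → ℕ → Bool) (T : ℕ → ℕ → ℕ)
    (hrow0 : ∀ j ≤ n, T 0 j = 0)
    (hcol0 : ∀ i ≤ n, T i 0 = 0)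
    (hT : ∀ i, 1 ≤ i → i ≤ n → ∀ j, 1 ≤ j → j ≤ n →
      T i j = if m (i - 1) (j - 1) = true then i else 0) :
    (∃ j < n, ∀ i < n, m i j = true) ↔ (∃ e ≤ n, ∀ x ≤ n, T x e = x) := by
  constructor
  · rintro ⟨j, hj, hcol⟩
    refine ⟨j + 1, by omega, fun x hx => ?_⟩
    rcases Nat.eq_zero_or_pos x with rfl | hx1
    · exact hrow0 (j + 1) (by omega)
    · rw [hT x hx1 hx (j + 1) (by omega) (by omega)]
      simp [hcol (x - 1) (by omega)]
  · rintro ⟨e, he, hid⟩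
    have he1 : 1 ≤ e := by
      by_contra h
      have : e = 0 := by omega
      subst this
      have := hid 1 hn
      rw [hcol0 1 hn] at this
      omega
    refine ⟨e - 1, by omega, fun i hi => ?_⟩
    have h := hid (i + 1) (by omega)
    rw [hT (i + 1) (by omega) (by omega) e he1 he] at h
    simp only [Nat.add_sub_cancel] at h
    by_contra hm
    simp [hm] at h
end

section
/- Let n ≥ 3 and let M be an n × n Boolean matrix. Define the table T on {0, 1, …, n−1} by: T(i, n−1−i) = n−1 if M(i,i) = 1 and T(i, n−1−i) = 0 otherwise; and for j ≠ n−1−i, T(i, j) = (i + j) mod n if M(i, n−1−j) = 0, T(i, j) = 0 if M(i, n−1−j) = 1 and (i + j) mod n ≠ 0, and T(i, j) = 1 if M(i, n−1−j) = 1 and (i + j) mod n = 0. Then ({0,…,n−1}, T) is a loop if and only if M is the identity matrix (M(i,j) = 1 exactly when i = j). -/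
/-!
For the identity matrix the table is addition mod `n`. Conversely, unmarked entries of a row
(and the diagonal entry, once `M i i = 1`) equal `(i + j) % n`, while marked ones lie in `{0, 1}`.
Row injectivity forces `M i i = 1`, and it forces a row with some marked off-diagonal entry to
mark its zero column `a`, so that `T i a = 1`. Then row `i + 1` also marks its zero column:
otherwise `T (i + 1) a = (i + 1 + a) % n = 1` as well, against column injectivity. So if one row
marks its zero column, all rows do, including row `0`, where `T 0 0 = 1` contradicts `0` being the
identity (the diagonal entry of the identity row forces the identity to be `0`).
-/

/-- `T` is a loop on `{0, …, n-1}`: for every `i < n`, the maps `j ↦ T i j` and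
`j ↦ T j i` are bijections of `{0, …, n-1}`, and there is an identity element. -/
def IsLoopOn (n : ℕ) (T : ℕ → ℕ → ℕ) : Prop :=
  (∀ i < n, Set.BijOn (fun j => T i j) (Set.Iio n) (Set.Iio n) ∧
      Set.BijOn (fun j => T j i) (Set.Iio n) (Set.Iio n)) ∧
  ∃ e < n, ∀ i < n, T i e = i ∧ T e i = i

open Set

theorem add_mod_injOn (i n : ℕ) : InjOn (fun j => (i + j) % n) (Iio n) :=
  fun _ hj _ hk h => Nat.ModEq.eq_of_lt_of_lt (Nat.ModEq.add_left_cancel' i h) hj hk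

theorem add_mod_bijOn {n : ℕ} (hn : 0 < n) (i : ℕ) :
    BijOn (fun j => (i + j) % n) (Iio n) (Iio n) :=
  ((finite_Iio n).injOn_iff_bijOn_of_mapsTo fun _ _ => Nat.mod_lt _ hn).mp (add_mod_injOn i n)

theorem add_sub_one_sub_mod {i n : ℕ} (hi : i < n) : (i + (n - 1 - i)) % n = n - 1 := by
  rw [show i + (n - 1 - i) = n - 1 by omega, Nat.mod_eq_of_lt (by omega)]

theorem add_sub_mod_self {i n : ℕ} (hi : i ≤ n) : (i + (n - i) % n) % n = 0 := by
  rw [Nat.add_mod_mod, Nat.add_sub_cancel' hi, Nat.mod_self]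

theorem ne_sub_one_sub_of_add_mod_lt {i j n : ℕ} (hi : i < n) (h : (i + j) % n < n - 1) :
    j ≠ n - 1 - i := by
  rintro rfl
  rw [add_sub_one_sub_mod hi] at h
  exact lt_irrefl _ h

theorem isLoopOn_add_mod {n : ℕ} (hn : 0 < n) : IsLoopOn n (fun i j => (i + j) % n) :=
  ⟨fun i _ => ⟨add_mod_bijOn hn i, by simpa only [add_comm] using add_mod_bijOn hn i⟩,
    0, hn, fun i hi => by simp [Nat.mod_eq_of_lt hi]⟩

theorem IsLoopOn.congr {n : ℕ} {T T' : ℕ → ℕ → ℕ} (h : IsLoopOn n T)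
    (hT : ∀ i < n, ∀ j < n, T i j = T' i j) : IsLoopOn n T' := by
  obtain ⟨hbij, e, he, heid⟩ := h
  refine ⟨fun i hi => ⟨(hbij i hi).1.congr fun j hj => hT i hi j hj,
    (hbij i hi).2.congr fun j hj => hT j hj i hi⟩, e, he, fun i hi => ?_⟩
  rw [← hT i hi e he, ← hT e he i hi]
  exact heid i hi

/-- Column `j` of row `i` is called *marked* when `M i (n - 1 - j) = true`; the *zero column* of
row `i` is `(n - i) % n`, where `i + j ≡ 0 [MOD n]`. -/
def OffDiagonalRule (n : ℕ) (M : ℕ → ℕ → Bool) (T : ℕ → ℕ → ℕ) : Prop :=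
  ∀ i < n, ∀ j < n, j ≠ n - 1 - i →
    T i j = if M i (n - 1 - j) = true then (if (i + j) % n ≠ 0 then 0 else 1) else (i + j) % n

namespace OffDiagonalRule

variable {n : ℕ} {M : ℕ → ℕ → Bool} {T : ℕ → ℕ → ℕ} {i j : ℕ}

theorem apply_of_marked (h : OffDiagonalRule n M T) (hi : i < n) (hj : j < n)
    (hjd : j ≠ n - 1 - i) (hM : M i (n - 1 - j) = true) :
    T i j = if (i + j) % n = 0 then 1 else 0 := by
  rw [h i hi j hj hjd, if_pos hM, ite_not]

theorem apply_of_not_marked (h : OffDiagonalRule n M T) (hi : i < n) (hj : j < n)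
    (hjd : j ≠ n - 1 - i) (hM : M i (n - 1 - j) = false) : T i j = (i + j) % n := by
  rw [h i hi j hj hjd, hM, if_neg Bool.false_ne_true]

theorem apply_le_one (h : OffDiagonalRule n M T) (hi : i < n) (hj : j < n)
    (hjd : j ≠ n - 1 - i) (hr : (i + j) % n ≤ 1) : T i j ≤ 1 := by
  rw [h i hi j hj hjd]
  split_ifs <;> omega

/-- If `M i i = false`, the diagonal entry and the entries in the two columns where `i + j` is
`0` and `1` mod `n` would be three distinct values in `{0, 1}`. -/
theorem diag_eq_true (h : OffDiagonalRule n M T) (hn : 3 ≤ n) (hi : i < n)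
    (hdiag : T i (n - 1 - i) = if M i i = true then n - 1 else 0)
    (hrow : InjOn (T i) (Iio n)) : M i i = true := by
  by_contra hM
  rw [if_neg hM] at hdiag
  obtain ⟨a, ha, hia⟩ := (add_mod_bijOn (by omega) i).surjOn (show 0 ∈ Iio n by simp; omega)
  obtain ⟨b, hb, hib⟩ := (add_mod_bijOn (by omega) i).surjOn (show 1 ∈ Iio n by simp; omega)
  simp only [mem_Iio] at ha hb hia hib
  have had := ne_sub_one_sub_of_add_mod_lt hi (show (i + a) % n < n - 1 by omega)
  have hbd := ne_sub_one_sub_of_add_mod_lt hi (show (i + b) % n < n - 1 by omega)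
  have hab : T i a ≠ T i b := (hrow.ne_iff ha hb).2 (by rintro rfl; omega)
  have hda : T i a ≠ T i (n - 1 - i) := (hrow.ne_iff ha (by simp; omega)).2 had
  have hdb : T i b ≠ T i (n - 1 - i) := (hrow.ne_iff hb (by simp; omega)).2 hbd
  have := h.apply_le_one hi ha had (by omega)
  have := h.apply_le_one hi hb hbd (by omega)
  omega

theorem marked_zero_of_marked (h : OffDiagonalRule n M T) (hn : 2 ≤ n) (hi : i < n)
    (hrow : InjOn (T i) (Iio n)) {a : ℕ} (ha : a < n) (hia : (i + a) % n = 0) (hj : j < n)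
    (hjd : j ≠ n - 1 - i) (hM : M i (n - 1 - j) = true) : M i (n - 1 - a) = true := by
  have had := ne_sub_one_sub_of_add_mod_lt hi (show (i + a) % n < n - 1 by omega)
  by_contra hMa
  have hTa : T i a = 0 := by
    rw [h.apply_of_not_marked hi ha had (by simpa using hMa), hia]
  have hTj := h.apply_of_marked hi hj hjd hM
  by_cases hij : (i + j) % n = 0
  · obtain rfl : j = a := add_mod_injOn i n hj ha (hij.trans hia.symm)
    exact hMa hM
  · obtain rfl : j = a := hrow hj ha (by rw [hTj, if_neg hij, hTa])
    exact hij hia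

theorem marked_zero_succ (h : OffDiagonalRule n M T) (hn : 3 ≤ n) (hi : i < n)
    (hrow : InjOn (T ((i + 1) % n)) (Iio n)) (hcol : InjOn (fun k => T k ((n - i) % n)) (Iio n))
    (hM : M i (n - 1 - (n - i) % n) = true) :
    M ((i + 1) % n) (n - 1 - (n - (i + 1) % n) % n) = true := by
  set a := (n - i) % n
  set k := (i + 1) % n
  have ha : a < n := Nat.mod_lt _ (by omega)
  have hk : k < n := Nat.mod_lt _ (by omega)
  have hia : (i + a) % n = 0 := add_sub_mod_self hi.le
  have hka : (k + a) % n = 1 := by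
    rw [Nat.mod_add_mod, add_right_comm, ← Nat.mod_add_mod, hia, zero_add,
      Nat.mod_eq_of_lt (by omega)]
  have hTia : T i a = 1 := by
    rw [h.apply_of_marked hi ha (ne_sub_one_sub_of_add_mod_lt hi (by omega)) hM, if_pos hia]
  by_contra hMk
  have hkad : a ≠ n - 1 - k := ne_sub_one_sub_of_add_mod_lt hk (by omega)
  have hMka : M k (n - 1 - a) = false := by
    by_contra hMka
    exact hMk (h.marked_zero_of_marked (by omega) hk hrow (Nat.mod_lt _ (by omega))
      (add_sub_mod_self hk.le) ha hkad (by simpa using hMka))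
  have hTka : T k a = 1 := by rw [h.apply_of_not_marked hk ha hkad hMka, hka]
  have hki : k = i := hcol hk hi (hTka.trans hTia.symm)
  rw [hki, hia] at hka
  exact zero_ne_one hka

theorem marked_zero_eq_false (h : OffDiagonalRule n M T) (hn : 3 ≤ n)
    (hrow : ∀ i < n, InjOn (T i) (Iio n)) (hcol : ∀ j < n, InjOn (fun k => T k j) (Iio n))
    (h00 : T 0 0 = 0) (hi : i < n) : M i (n - 1 - (n - i) % n) = false := by
  by_contra hM
  have hmarked : ∀ m, M ((i + m) % n) (n - 1 - (n - (i + m) % n) % n) = true := by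
    intro m
    induction m with
    | zero => simpa [Nat.mod_eq_of_lt hi] using hM
    | succ m ih =>
      have hm : (i + m) % n < n := Nat.mod_lt _ (by omega)
      have := h.marked_zero_succ hn hm (hrow _ (Nat.mod_lt _ (by omega)))
        (hcol _ (Nat.mod_lt _ (by omega))) ih
      rwa [Nat.mod_add_mod, add_assoc] at this
  have h0 := hmarked (n - i)
  rw [Nat.add_sub_cancel' hi.le, Nat.mod_self, Nat.sub_zero, Nat.mod_self] at h0
  have := h.apply_of_marked (by omega) (by omega) (by omega) h0
  simp only [add_zero, Nat.zero_mod, if_true, h00] at this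
  exact zero_ne_one this

theorem apply_eq_add_mod (h : OffDiagonalRule n M T) (hi : i < n) (hj : j < n)
    (hdiag : T i (n - 1 - i) = if M i i = true then n - 1 else 0)
    (hM : ∀ k < n, (M i k = true ↔ i = k)) : T i j = (i + j) % n := by
  by_cases hjd : j = n - 1 - i
  · rw [hjd, hdiag, if_pos ((hM i hi).2 rfl), add_sub_one_sub_mod hi]
  · have hij : i ≠ n - 1 - j := by omega
    exact h.apply_of_not_marked hi hj hjd
      (Bool.eq_false_iff.2 fun hMij => hij ((hM _ (by omega)).1 hMij))

end OffDiagonalRule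

/-- Let `n ≥ 3`, let `M` be an `n × n` Boolean matrix (`true` meaning `1`), and
let `T` be the table on `{0, …, n-1}` defined by: `T i (n-1-i) = n-1` if
`M i i = 1` and `0` otherwise; for `j ≠ n-1-i`, `T i j = (i+j) % n` if
`M i (n-1-j) = 0`, `T i j = 0` if `M i (n-1-j) = 1` and `(i+j) % n ≠ 0`, and
`T i j = 1` otherwise.  Then `T` is a loop on `{0, …, n-1}` iff `M` is the
identity matrix. -/
theorem loop_iff_identity_matrix (n : ℕ) (hn : 3 ≤ n)
    (M : ℕ → ℕ → Bool) (T : ℕ → ℕ → ℕ)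
    (hdiag : ∀ i < n, T i (n - 1 - i) = if M i i = true then n - 1 else 0)
    (hoff : ∀ i < n, ∀ j < n, j ≠ n - 1 - i →
      T i j = if M i (n - 1 - j) = true
        then (if (i + j) % n ≠ 0 then 0 else 1)
        else (i + j) % n) :
    IsLoopOn n T ↔ (∀ i < n, ∀ j < n, (M i j = true ↔ i = j)) := by
  have hrule : OffDiagonalRule n M T := hoff
  constructor
  · rintro ⟨hbij, e, he, heid⟩
    have hrow i (hi : i < n) : InjOn (T i) (Iio n) := (hbij i hi).1.injOn
    have hcol j (hj : j < n) : InjOn (fun k => T k j) (Iio n) := (hbij j hj).2.injOn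
    have hMdiag i (hi : i < n) : M i i = true := hrule.diag_eq_true hn hi (hdiag i hi) (hrow i hi)
    obtain rfl : e = 0 := by
      have := (heid (n - 1 - e) (by omega)).2
      rw [hdiag e he, if_pos (hMdiag e he)] at this
      omega
    refine fun i hi j hj => ⟨fun hM => ?_, fun hij => hij ▸ hMdiag i hi⟩
    by_contra hij
    have hM' : M i (n - 1 - (n - 1 - j)) = true := by rwa [Nat.sub_sub_self (by omega)]
    have hzero := hrule.marked_zero_of_marked (by omega) hi (hrow i hi)
      (Nat.mod_lt _ (by omega)) (add_sub_mod_self hi.le) (by omega : n - 1 - j < n) (by omega) hM'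
    rw [hrule.marked_zero_eq_false hn hrow hcol (heid 0 he).1 hi] at hzero
    exact Bool.false_ne_true hzero
  · intro hM
    exact (isLoopOn_add_mod (by omega)).congr fun i hi j hj =>
      (hrule.apply_eq_add_mod hi hj (hdiag i hi) (hM i hi)).symm
end

section
/- Let n ≥ 3 and let M be an n × n Boolean matrix. Define the table T on {0, 1, …, n−1} by: T(i, n−1−i) = n−1 if M(i,i) = 1 and T(i, n−1−i) = 0 otherwise; and for j ≠ n−1−i, T(i, j) = (i + j) mod n if M(i, n−1−j) = 0, T(i, j) = 0 if M(i, n−1−j) = 1 and (i + j) mod n ≠ 0, and T(i, j) = 1 if M(i, n−1−j) = 1 and (i + j) mod n = 0. If M(i, i) = 0 for some i, then the value n−1 does not occur in row i of T, i.e., there is no j with T(i, j) = n−1; in particular the map j ↦ T(i, j) is not a bijection of {0,…,n−1}. -/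
/-- Let `n ≥ 3`, let `M` be an `n × n` Boolean matrix (`true` meaning `1`), and
let `T` be the table on `{0, …, n-1}` defined by: `T i (n-1-i) = n-1` if
`M i i = 1` and `0` otherwise; for `j ≠ n-1-i`, `T i j = (i+j) % n` if
`M i (n-1-j) = 0`, `T i j = 0` if `M i (n-1-j) = 1` and `(i+j) % n ≠ 0`, and
`T i j = 1` otherwise.  If `M i i = 0` for some `i < n`, then the value `n-1`
does not occur in row `i` of `T`; in particular `j ↦ T i j` is not a bijection
of `{0, …, n-1}`. -/
theorem zero_diagonal_row_misses_value (n : ℕ) (hn : 3 ≤ n)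
    (M : ℕ → ℕ → Bool) (T : ℕ → ℕ → ℕ)
    (hdiag : ∀ i < n, T i (n - 1 - i) = if M i i = true then n - 1 else 0)
    (hoff : ∀ i < n, ∀ j < n, j ≠ n - 1 - i →
      T i j = if M i (n - 1 - j) = true
        then (if (i + j) % n ≠ 0 then 0 else 1)
        else (i + j) % n)
    (i : ℕ) (hi : i < n) (hMi : M i i = false) :
    (∀ j < n, T i j ≠ n - 1) ∧
      ¬ Set.BijOn (fun j => T i j) (Set.Iio n) (Set.Iio n) := by
  have hmain : ∀ j < n, T i j ≠ n - 1 := by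
    intro j hj
    by_cases hji : j = n - 1 - i
    · subst hji
      rw [hdiag i hi, hMi]
      simp
      omega
    · rw [hoff i hi j hj hji]
      by_cases hM : M i (n - 1 - j) = true
      · simp [hM]
        split <;> omega
      · simp [hM]
        have h1 : i + j < 2 * n := by omega
        have h2 : i + j ≠ n - 1 := by omega
        have h3 : i + j ≠ 2 * n - 1 := by omega
        rcases Nat.lt_or_ge (i + j) n with h | h
        · rw [Nat.mod_eq_of_lt h]; omega
        · have : (i + j) % n = i + j - n := by
            rw [Nat.mod_eq_sub_mod h, Nat.mod_eq_of_lt (by omega)]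
          omega
  refine ⟨hmain, fun hbij => ?_⟩
  obtain ⟨j, hj, hTj⟩ := hbij.surjOn (show n - 1 ∈ Set.Iio n by simp; omega)
  exact hmain j hj hTj
end
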